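/- arXiv:2604.23619 — 2 statements merged into one kernel-verified Lean document; each statement's English description precedes it below -/
import Mathlib

section
/- Let φ be a real-valued Schwartz function on ℝ with φ(x) > 0 for every x, let ν ∈ (0,2), let h ∈ L²(ℝ), and set f(x) = φ(x)^ν·h(x) (the source condition) and g = φ·f. Let c_ν = sup_{s ≥ 0} s^ν/(s² + 1), which is finite. Then for every λ > 0, ‖R_λ g − f‖_{L²} ≤ c_ν · λ^{ν/2} · ‖h‖_{L²}. -/
open MeasureTheory

/-- The Tikhonov-regularised reconstruction operator
`(R_λ g)(x) = φ(x)·g(x)/(φ(x)² + λ)`. -/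
noncomputable def tikhonovRecon (φ : SchwartzMap ℝ ℝ) (lam : ℝ) (g : ℝ → ℝ) : ℝ → ℝ :=
  fun x => φ x * g x / ((φ x) ^ 2 + lam)

/-! Pointwise, the residual is `R_λ(φ f) − f = −λ f / (φ² + λ)`, so under the source condition
its absolute value is `λ φ^ν / (φ² + λ) · |h|`. With `s = φ / √λ` the factor equals
`λ^{ν/2} · s^ν / (s² + 1) ≤ c_ν λ^{ν/2}`, and the `L²` bound follows by monotonicity of the norm. -/

theorem rpow_div_sq_add_one_le_one {s ν : ℝ} (hs : 0 ≤ s) (hν0 : 0 ≤ ν) (hν2 : ν ≤ 2) :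
    s ^ ν / (s ^ 2 + 1) ≤ 1 := by
  rw [div_le_one (by positivity)]
  rcases le_or_gt s 1 with hs1 | hs1
  · linarith [Real.rpow_le_one hs hs1 hν0, sq_nonneg s]
  · have : s ^ ν ≤ s ^ (2 : ℝ) := Real.rpow_le_rpow_of_exponent_le hs1.le hν2
    rw [Real.rpow_two] at this
    linarith

theorem bddAbove_range_rpow_div_sq_add_one {ν : ℝ} (hν0 : 0 ≤ ν) (hν2 : ν ≤ 2) :
    BddAbove (Set.range fun s : Set.Ici (0 : ℝ) => (s : ℝ) ^ ν / ((s : ℝ) ^ 2 + 1)) :=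
  ⟨1, by rintro _ ⟨⟨s, hs⟩, rfl⟩; exact rpow_div_sq_add_one_le_one hs hν0 hν2⟩

theorem mul_rpow_div_sq_add_eq {p ν lam : ℝ} (hp : 0 ≤ p) (hlam : 0 < lam) :
    lam * p ^ ν / (p ^ 2 + lam) = lam ^ (ν / 2) * ((p / √lam) ^ ν / ((p / √lam) ^ 2 + 1)) := by
  have hsqrt_rpow : √lam ^ ν = lam ^ (ν / 2) := by
    rw [Real.sqrt_eq_rpow, ← Real.rpow_mul hlam.le, one_div_mul_eq_div]
  have hpos : 0 < lam ^ (ν / 2) := Real.rpow_pos_of_pos hlam _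
  rw [Real.div_rpow hp (Real.sqrt_nonneg _), hsqrt_rpow, div_pow, Real.sq_sqrt hlam.le]
  field_simp

theorem mul_rpow_div_sq_add_le_ciSup {p ν lam : ℝ}
    (hbdd : BddAbove (Set.range fun s : Set.Ici (0 : ℝ) => (s : ℝ) ^ ν / ((s : ℝ) ^ 2 + 1)))
    (hp : 0 ≤ p) (hlam : 0 < lam) :
    lam * p ^ ν / (p ^ 2 + lam)
      ≤ (⨆ s : Set.Ici (0 : ℝ), (s : ℝ) ^ ν / ((s : ℝ) ^ 2 + 1)) * lam ^ (ν / 2) := by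
  rw [mul_rpow_div_sq_add_eq hp hlam, mul_comm]
  have hs : (0 : ℝ) ≤ p / √lam := div_nonneg hp (Real.sqrt_nonneg _)
  exact mul_le_mul_of_nonneg_right (le_ciSup hbdd (⟨p / √lam, hs⟩ : Set.Ici (0 : ℝ)))
    (by positivity)

theorem tikhonovRecon_mul_sub (φ : SchwartzMap ℝ ℝ) {lam : ℝ} (hlam : 0 < lam) (f : ℝ → ℝ)
    (x : ℝ) :
    tikhonovRecon φ lam (fun y => φ y * f y) x - f x = -(lam / (φ x ^ 2 + lam) * f x) := by
  have : φ x ^ 2 + lam ≠ 0 := by positivity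
  simp only [tikhonovRecon]
  field_simp
  ring

theorem tikhonovRecon_source_rate_general (φ : SchwartzMap ℝ ℝ) (hφ : ∀ x, 0 < φ x)
    (ν : ℝ) (hν : ν ∈ Set.Ioo (0 : ℝ) 2) (h : ℝ → ℝ)
    (lam : ℝ) (hlam : 0 < lam) :
    BddAbove (Set.range fun s : Set.Ici (0 : ℝ) => (s : ℝ) ^ ν / ((s : ℝ) ^ 2 + 1)) ∧
    eLpNorm
        (fun x => tikhonovRecon φ lam (fun y => φ y * ((φ y) ^ ν * h y)) x
          - (φ x) ^ ν * h x) 2 (volume : Measure ℝ)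
      ≤ ENNReal.ofReal
          ((⨆ s : Set.Ici (0 : ℝ), (s : ℝ) ^ ν / ((s : ℝ) ^ 2 + 1)) * lam ^ (ν / 2))
        * eLpNorm h 2 (volume : Measure ℝ) := by
  have hbdd := bddAbove_range_rpow_div_sq_add_one hν.1.le hν.2.le
  refine ⟨hbdd, eLpNorm_le_mul_eLpNorm_of_ae_le_mul (ae_of_all _ fun x => ?_) 2⟩
  have hφx := (hφ x).le
  rw [tikhonovRecon_mul_sub φ hlam, norm_neg, ← mul_assoc, div_mul_eq_mul_div, norm_mul,
    Real.norm_of_nonneg (by positivity)]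
  exact mul_le_mul_of_nonneg_right (mul_rpow_div_sq_add_le_ciSup hbdd hφx hlam) (norm_nonneg _)

/-- Source-condition rate for Tikhonov reconstruction: if `φ > 0`, `ν ∈ (0,2)`,
`h ∈ L²(ℝ)`, `f = φ^ν·h` and `g = φ·f`, then with
`c_ν = sup_{s ≥ 0} s^ν/(s²+1)` (a finite constant), for every `λ > 0`,
`‖R_λ g − f‖_{L²} ≤ c_ν · λ^{ν/2} · ‖h‖_{L²}`. -/
theorem tikhonovRecon_source_rate (φ : SchwartzMap ℝ ℝ) (hφ : ∀ x, 0 < φ x)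
    (ν : ℝ) (hν : ν ∈ Set.Ioo (0 : ℝ) 2) (h : ℝ → ℝ)
    (hh : MemLp h 2 (volume : Measure ℝ)) (lam : ℝ) (hlam : 0 < lam) :
    BddAbove (Set.range fun s : Set.Ici (0 : ℝ) => (s : ℝ) ^ ν / ((s : ℝ) ^ 2 + 1)) ∧
    eLpNorm
        (fun x => tikhonovRecon φ lam (fun y => φ y * ((φ y) ^ ν * h y)) x
          - (φ x) ^ ν * h x) 2 (volume : Measure ℝ)
      ≤ ENNReal.ofReal
          ((⨆ s : Set.Ici (0 : ℝ), (s : ℝ) ^ ν / ((s : ℝ) ^ 2 + 1)) * lam ^ (ν / 2))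
        * eLpNorm h 2 (volume : Measure ℝ) :=
  tikhonovRecon_source_rate_general φ hφ ν hν h lam hlam
end

section
/- Let m : ℝ → ℝ be differentiable at θ₀ with m′(θ₀) ≠ 0, let a ∈ ℝ, and let θ : ℝ → ℝ be a function continuous at 0 with θ(0) = θ₀ that satisfies, for all ε in a neighbourhood of 0, the contaminated weak-moment equation m(θ(ε)) = (1 − ε)·m(θ₀) + ε·a. Then θ is differentiable at 0 and θ′(0) = (a − m(θ₀))/m′(θ₀). In particular, taking a = x^j·φ(x) and m the weak moment map θ ↦ m_j(θ), the influence function of the weak moment estimator at the contamination point x equals (x^j·φ(x) − m_j(θ₀))/m′_j(θ₀). -/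
open Filter Topology

/-- Influence function of a weak moment estimator.  If `m` is differentiable at `θ₀`
with `m′(θ₀) ≠ 0`, and `θ(ε)` is continuous at `0` with `θ(0) = θ₀` and solves the
contaminated weak-moment equation `m(θ(ε)) = (1 − ε)·m(θ₀) + ε·a` for all `ε` near
`0`, then `θ` is differentiable at `0` with derivative
`θ′(0) = (a − m(θ₀))/m′(θ₀)`. -/
theorem influence_function_weak_moment (m : ℝ → ℝ) (θ₀ : ℝ)
    (hm : DifferentiableAt ℝ m θ₀) (hd : deriv m θ₀ ≠ 0) (a : ℝ)
    (θ : ℝ → ℝ) (hθc : ContinuousAt θ 0) (hθ0 : θ 0 = θ₀)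
    (heq : ∀ᶠ ε in nhds (0 : ℝ), m (θ ε) = (1 - ε) * m θ₀ + ε * a) :
    HasDerivAt θ ((a - m θ₀) / deriv m θ₀) 0 := by
  set d := deriv m θ₀ with hdd
  set g : ℝ → ℝ := fun y => if y = θ₀ then d else slope m θ₀ y with hg
  have hslope : Tendsto (slope m θ₀) (𝓝[≠] θ₀) (𝓝 d) :=
    hasDerivAt_iff_tendsto_slope.mp hm.hasDerivAt
  have hgt : Tendsto g (𝓝[≠] θ₀) (𝓝 d) := by
    refine hslope.congr' ?_
    filter_upwards [self_mem_nhdsWithin] with y hy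
    simp [hg, Set.mem_compl_iff, Set.mem_singleton_iff] at hy ⊢
    simp [hy]
  have hgc : Tendsto g (𝓝 θ₀) (𝓝 d) := by
    rw [← nhdsNE_sup_pure]
    refine Tendsto.sup hgt ?_
    have : g θ₀ = d := by simp [hg]
    rw [← this]
    exact tendsto_pure_nhds g θ₀
  have hθt : Tendsto θ (𝓝 (0 : ℝ)) (𝓝 θ₀) := by
    have := hθc.tendsto; rwa [hθ0] at this
  have hh : Tendsto (fun ε => g (θ ε)) (𝓝 (0 : ℝ)) (𝓝 d) := hgc.comp hθt
  have hne : ∀ᶠ ε in 𝓝 (0 : ℝ), g (θ ε) ≠ 0 := hh.eventually_ne hd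
  have htend : Tendsto (fun ε => (a - m θ₀) / g (θ ε)) (𝓝 (0 : ℝ))
      (𝓝 ((a - m θ₀) / d)) := tendsto_const_nhds.div hh hd
  rw [hasDerivAt_iff_tendsto_slope]
  refine (htend.mono_left nhdsWithin_le_nhds).congr' ?_
  filter_upwards [heq.filter_mono nhdsWithin_le_nhds,
    hne.filter_mono nhdsWithin_le_nhds, self_mem_nhdsWithin] with ε h1 h2 hε
  have hε0 : ε ≠ 0 := by simpa using hε
  have key : m (θ ε) - m θ₀ = ε * (a - m θ₀) := by rw [h1]; ring
  by_cases hy : θ ε = θ₀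
  · have ha : a - m θ₀ = 0 := by
      have : (0 : ℝ) = ε * (a - m θ₀) := by rw [← key, hy, sub_self]
      rcases mul_eq_zero.mp this.symm with h | h
      · exact absurd h hε0
      · exact h
    rw [slope_def_field, hθ0, hy, ha]
    simp
  · have hgε : g (θ ε) = (m (θ ε) - m θ₀) / (θ ε - θ₀) := by
      simp [hg, hy, slope_def_field]
    have hsub : θ ε - θ₀ ≠ 0 := sub_ne_zero.mpr hy
    have ha : a - m θ₀ ≠ 0 := by
      intro h
      apply h2
      rw [hgε, key, h, mul_zero, zero_div]
    rw [slope_def_field, hθ0, sub_zero, hgε, key]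
    field_simp
end
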